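/- Let U_s ∈ C^{M×N} have orthonormal columns, W ∈ C^{N×N} Hermitian positive semidefinite, and a ∈ C^M nonzero. Then for all k ≤ N, λ_k(P_a^⊥ U_s W U_s^H) = λ_k(W - (1/‖a‖₂²) W^{1/2} U_s^H a a^H U_s W^{1/2}), and λ_k(P_a^⊥ U_s W U_s^H) = 0 for k > N. -/

import Mathlib

/-!
Put `B = P_a^⊥ U_s W^{1/2}`. Since `P_a^⊥` is a Hermitian idempotent and `W^{1/2}` is Hermitian
with square `W`, `P_a^⊥ U_s W U_sᴴ P_a^⊥ = B Bᴴ`; since moreover `U_sᴴ U_s = 1`,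
`W - ‖a‖⁻² W^{1/2} U_sᴴ a aᴴ U_s W^{1/2} = U_sᴴ P_a^⊥ U_s` conjugated by `W^{1/2}`, i.e. `Bᴴ B`.
The characteristic polynomials satisfy `χ(B Bᴴ) = X^(M-N) χ(Bᴴ B)`, and the eigenvalues of `Bᴴ B`
are nonnegative, so the decreasingly sorted spectrum of `B Bᴴ` is that of `Bᴴ B` followed by
`M - N` zeros.
-/

open Matrix ComplexOrder

/-- Descending (k-th largest) eigenvalue of a Hermitian complex matrix. -/
noncomputable def eigDesc {n : ℕ} (A : Matrix (Fin n) (Fin n) ℂ) (k : Fin n) : ℝ :=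
  if h : A.IsHermitian then (h.eigenvalues ∘ Tuple.sort h.eigenvalues) k.rev else 0

/-- The positive semidefinite square root of a positive semidefinite matrix
(the definition `Matrix.PosSemidef.sqrt` of the older Mathlib, since removed). -/
noncomputable def Matrix.PosSemidef.sqrt {n : ℕ} {A : Matrix (Fin n) (Fin n) ℂ}
    (hA : A.PosSemidef) : Matrix (Fin n) (Fin n) ℂ :=
  (hA.1.eigenvectorUnitary : Matrix (Fin n) (Fin n) ℂ) *
    diagonal ((↑) ∘ (Real.sqrt ·) ∘ hA.1.eigenvalues) *
    (star hA.1.eigenvectorUnitary : Matrix (Fin n) (Fin n) ℂ)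

/-- Orthogonal projector onto the orthogonal complement of `span {a}`. -/
noncomputable def projPerp {M : ℕ} (a : Fin M → ℂ) : Matrix (Fin M) (Fin M) ℂ :=
  1 - (star a ⬝ᵥ a)⁻¹ • Matrix.vecMulVec a (star a)

open Polynomial

theorem Matrix.roots_charpoly_mul_comm_of_le {R m n : Type*} [Field R] [Fintype m] [DecidableEq m]
    [Fintype n] [DecidableEq n] (A : Matrix m n R) (B : Matrix n m R)
    (hle : Fintype.card n ≤ Fintype.card m) :
    (A * B).charpoly.roots =
      Multiset.replicate (Fintype.card m - Fintype.card n) 0 + (B * A).charpoly.roots := by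
  rw [charpoly_mul_comm_of_le A B hle,
    roots_mul (mul_ne_zero (pow_ne_zero _ X_ne_zero) (B * A).charpoly_monic.ne_zero),
    roots_X_pow, Multiset.nsmul_singleton]

section eigDesc

variable {n : ℕ} {A : Matrix (Fin n) (Fin n) ℂ}

theorem eigDesc_eq_comp_perm (hA : A.IsHermitian) :
    eigDesc A = hA.eigenvalues ∘ (Fin.revPerm.trans (Tuple.sort hA.eigenvalues)) := by
  funext k
  simp [eigDesc, hA]

theorem eigDesc_antitone (hA : A.IsHermitian) : Antitone (eigDesc A) := by
  intro i j hij
  simp only [eigDesc_eq_comp_perm hA, Function.comp_apply, Equiv.trans_apply, Fin.revPerm_apply]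
  exact Tuple.monotone_sort hA.eigenvalues (Fin.rev_anti hij)

theorem eigDesc_nonneg (hA : A.PosSemidef) (k : Fin n) : 0 ≤ eigDesc A k := by
  rw [eigDesc_eq_comp_perm hA.1]
  exact hA.eigenvalues_nonneg _

theorem coe_ofFn_eigDesc (hA : A.IsHermitian) :
    (List.ofFn (eigDesc A) : Multiset ℝ) = A.charpoly.roots.map RCLike.re := by
  rw [hA.roots_charpoly_eq_eigenvalues, Multiset.map_map, ← Fin.univ_val_map,
    eigDesc_eq_comp_perm hA, ← Multiset.map_map, Multiset.map_univ_val_equiv]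
  simp [Function.comp_def]

end eigDesc

theorem ofFn_eigDesc_mul_conjTranspose {M N : ℕ} (hNM : N ≤ M) (B : Matrix (Fin M) (Fin N) ℂ) :
    List.ofFn (eigDesc (B * Bᴴ)) = List.ofFn (eigDesc (Bᴴ * B)) ++ List.replicate (M - N) 0 := by
  have hBBH := posSemidef_self_mul_conjTranspose B
  have hBHB := posSemidef_conjTranspose_mul_self B
  refine List.Perm.eq_of_sortedGE ?_ ?_ ?_
  · exact List.sortedGE_ofFn_iff.2 (eigDesc_antitone hBBH.1)
  · rw [List.sortedGE_iff_pairwise, List.pairwise_append]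
    refine ⟨List.sortedGE_iff_pairwise.1 (List.sortedGE_ofFn_iff.2 (eigDesc_antitone hBHB.1)),
      List.pairwise_replicate_of_refl, ?_⟩
    simp only [List.mem_ofFn, List.mem_replicate]
    rintro _ ⟨k, rfl⟩ _ ⟨-, rfl⟩
    exact eigDesc_nonneg hBHB k
  · rw [← Multiset.coe_eq_coe, ← Multiset.coe_add, coe_ofFn_eigDesc hBBH.1,
      coe_ofFn_eigDesc hBHB.1, roots_charpoly_mul_comm_of_le _ _ (by simpa using hNM)]
    simp [add_comm, Multiset.coe_replicate]

theorem eigDesc_mul_conjTranspose_of_lt {M N : ℕ} (hNM : N ≤ M) (B : Matrix (Fin M) (Fin N) ℂ)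
    (k : Fin M) (hk : (k : ℕ) < N) : eigDesc (B * Bᴴ) k = eigDesc (Bᴴ * B) ⟨k, hk⟩ := by
  have h := congrArg (·[(k : ℕ)]?) (ofFn_eigDesc_mul_conjTranspose hNM B)
  simpa [List.getElem?_append_left, hk] using h

theorem eigDesc_mul_conjTranspose_of_le {M N : ℕ} (hNM : N ≤ M) (B : Matrix (Fin M) (Fin N) ℂ)
    (k : Fin M) (hk : N ≤ (k : ℕ)) : eigDesc (B * Bᴴ) k = 0 := by
  have h := congrArg (·[(k : ℕ)]?) (ofFn_eigDesc_mul_conjTranspose hNM B)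
  simpa [List.getElem?_append_right, hk, List.getElem?_replicate,
    show (k : ℕ) - N < M - N by omega] using h

namespace Matrix.PosSemidef

variable {n : ℕ} {A : Matrix (Fin n) (Fin n) ℂ}

theorem sqrt_eq_cfc (hA : A.PosSemidef) : hA.sqrt = cfc Real.sqrt A := by
  rw [hA.1.cfc_eq, IsHermitian.cfc, Unitary.conjStarAlgAut_apply]
  rfl

theorem conjTranspose_sqrt (hA : A.PosSemidef) : hA.sqrtᴴ = hA.sqrt := by
  rw [sqrt_eq_cfc]
  exact (cfc_predicate Real.sqrt A : IsSelfAdjoint _)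

theorem sqrt_mul_self (hA : A.PosSemidef) : hA.sqrt * hA.sqrt = A := by
  rw [sqrt_eq_cfc, ← cfc_mul Real.sqrt Real.sqrt A]
  conv_rhs => rw [← cfc_id' ℝ A hA.1.isSelfAdjoint]
  refine cfc_congr fun x hx => ?_
  rw [hA.1.spectrum_real_eq_range_eigenvalues] at hx
  obtain ⟨i, rfl⟩ := hx
  exact Real.mul_self_sqrt (hA.eigenvalues_nonneg i)

end Matrix.PosSemidef

section projPerp

variable {M : ℕ} (a : Fin M → ℂ)

theorem conjTranspose_projPerp : (projPerp a)ᴴ = projPerp a := by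
  rw [projPerp, conjTranspose_sub, conjTranspose_one, conjTranspose_smul, star_inv₀,
    ← star_dotProduct, conjTranspose_vecMulVec, star_star]

theorem projPerp_mul_self : projPerp a * projPerp a = projPerp a := by
  have hQQ : vecMulVec a (star a) * vecMulVec a (star a) =
      (star a ⬝ᵥ a) • vecMulVec a (star a) := by
    rw [vecMulVec_mul_vecMulVec, vecMulVec_smul]
  have hc : (star a ⬝ᵥ a)⁻¹ * (star a ⬝ᵥ a)⁻¹ * (star a ⬝ᵥ a) = (star a ⬝ᵥ a)⁻¹ := by
    simpa only [inv_inv] using mul_self_mul_inv (star a ⬝ᵥ a)⁻¹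
  rw [projPerp, sub_mul, one_mul, mul_sub, mul_one, smul_mul_assoc, mul_smul_comm, hQQ,
    smul_smul, smul_smul, hc, sub_self, sub_zero]

theorem conjTranspose_mul_projPerp_mul {N : ℕ} {U : Matrix (Fin M) (Fin N) ℂ} (hU : Uᴴ * U = 1) :
    Uᴴ * projPerp a * U = 1 - (star a ⬝ᵥ a)⁻¹ • vecMulVec (Uᴴ *ᵥ a) (star (Uᴴ *ᵥ a)) := by
  rw [projPerp, Matrix.mul_sub, Matrix.sub_mul, Matrix.mul_one, hU, Matrix.mul_smul,
    Matrix.smul_mul, mul_vecMulVec, vecMulVec_mul, star_mulVec, conjTranspose_conjTranspose]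

end projPerp

/-- `P_a^⊥ U_s W U_sᴴ` is not Hermitian; as `P_a^⊥` is idempotent it has the same eigenvalues as
the Hermitian matrix `P_a^⊥ U_s W U_sᴴ P_a^⊥`, to which `eigDesc` is applied. -/
theorem stmt14_general {M N : ℕ} (hMN : N ≤ M)
    (Us : Matrix (Fin M) (Fin N) ℂ) (hUs : Usᴴ * Us = 1)
    (W : Matrix (Fin N) (Fin N) ℂ) (hW : W.PosSemidef)
    (a : Fin M → ℂ) :
    (∀ k : Fin M, ∀ h : (k : ℕ) < N,
        eigDesc (projPerp a * (Us * W * Usᴴ) * projPerp a) k =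
          eigDesc (W - (star a ⬝ᵥ a)⁻¹ •
            (hW.sqrt * Matrix.vecMulVec (Usᴴ *ᵥ a) (star (Usᴴ *ᵥ a)) * hW.sqrt))
            ⟨(k : ℕ), h⟩) ∧
      ∀ k : Fin M, N ≤ (k : ℕ) →
        eigDesc (projPerp a * (Us * W * Usᴴ) * projPerp a) k = 0 := by
  obtain ⟨B, hB⟩ : ∃ B, B = projPerp a * Us * hW.sqrt := ⟨_, rfl⟩
  have hBH : Bᴴ = hW.sqrt * Usᴴ * projPerp a := by
    simp only [hB, conjTranspose_mul, hW.conjTranspose_sqrt, conjTranspose_projPerp,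
      Matrix.mul_assoc]
  have hBBH : projPerp a * (Us * W * Usᴴ) * projPerp a = B * Bᴴ := by
    rw [hBH, hB]
    conv_lhs => rw [← hW.sqrt_mul_self]
    simp only [Matrix.mul_assoc]
  have hBHB : W - (star a ⬝ᵥ a)⁻¹ •
      (hW.sqrt * vecMulVec (Usᴴ *ᵥ a) (star (Usᴴ *ᵥ a)) * hW.sqrt) = Bᴴ * B := by
    calc _ = hW.sqrt * (Usᴴ * projPerp a * Us) * hW.sqrt := by
          rw [conjTranspose_mul_projPerp_mul a hUs, Matrix.mul_sub, Matrix.sub_mul,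
            Matrix.mul_one, hW.sqrt_mul_self, Matrix.mul_smul, Matrix.smul_mul]
      _ = Bᴴ * B := by
          rw [hBH, hB]
          simp only [Matrix.mul_assoc, ← Matrix.mul_assoc (projPerp a) (projPerp a),
            projPerp_mul_self]
  rw [hBBH, hBHB]
  exact ⟨eigDesc_mul_conjTranspose_of_lt hMN B, fun k => eigDesc_mul_conjTranspose_of_le hMN B k⟩

/-- The eigenvalues of `P_a^⊥ U_s W U_sᴴ` (computed through the Hermitian matrix
`P_a^⊥ U_s W U_sᴴ P_a^⊥`, which has the same eigenvalues): the first `N` of them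
agree with those of `W - (1/‖a‖²) W^{1/2} U_sᴴ a aᴴ U_s W^{1/2}`, the rest vanish. -/
theorem stmt14 {M N : ℕ} (hMN : N ≤ M)
    (Us : Matrix (Fin M) (Fin N) ℂ) (hUs : Usᴴ * Us = 1)
    (W : Matrix (Fin N) (Fin N) ℂ) (hW : W.PosSemidef)
    (a : Fin M → ℂ) (ha : a ≠ 0) :
    (∀ k : Fin M, ∀ h : (k : ℕ) < N,
        eigDesc (projPerp a * (Us * W * Usᴴ) * projPerp a) k =
          eigDesc (W - (star a ⬝ᵥ a)⁻¹ •
            (hW.sqrt * Matrix.vecMulVec (Usᴴ *ᵥ a) (star (Usᴴ *ᵥ a)) * hW.sqrt))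
            ⟨(k : ℕ), h⟩) ∧
      ∀ k : Fin M, N ≤ (k : ℕ) →
        eigDesc (projPerp a * (Us * W * Usᴴ) * projPerp a) k = 0 :=
  stmt14_general hMN Us hUs W hW a
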